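/- Let k ≥ 0 and let P_{2k+2} ∈ ℚ[X,Y] be the polynomial with t^{2k+2} + s^{2k+2} = P_{2k+2}(t+s, t²+s²). Then every monomial X^i Y^j appearing in P_{2k+2} satisfies i + 2j = 2k+2, the coefficient of Y^{k+1} in P_{2k+2} equals 1/2^k, and every other monomial X^i Y^j appearing in P_{2k+2} has total degree i + j ≥ k + 2. -/

import Mathlib

/-!
Over `ℚ` the substitution `X ↦ t + s`, `Y ↦ t² + s²` is injective, since it differs from the
substitution of the elementary symmetric polynomials by an invertible triangular change of
variables, and it sends `XⁱYʲ` to a homogeneous polynomial of degree `i + 2j`. As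
`t^(2k+2) + s^(2k+2)` is homogeneous, `P` is weighted homogeneous of weight `2k+2`. Evaluating at
`t = 1`, `s = -1`, that is at `X = 0`, `Y = 2`, kills every monomial but `Y^(k+1)` and gives
`2 = c · 2^(k+1)`. Every other monomial has `i + 2j = 2k+2` with `i > 0` even, so `i + j ≥ k+2`.
-/

open MvPolynomial Function

theorem Finsupp.eq_single_one_of_apply_zero_eq_zero {d : Fin 2 →₀ ℕ} (h : d 0 = 0) :
    d = Finsupp.single 1 (d 1) := by
  ext i
  fin_cases i <;> simp [h]

namespace MvPolynomial

section Substitution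

variable {σ τ R : Type*} [CommSemiring R] {w : σ → ℕ} {f : σ → MvPolynomial τ R}

theorem isHomogeneous_aeval_monomial (hf : ∀ i, (f i).IsHomogeneous (w i))
    (d : σ →₀ ℕ) (c : R) :
    (aeval f (monomial d c)).IsHomogeneous (Finsupp.weight w d) := by
  rw [aeval_monomial, Finsupp.weight_apply, Finsupp.sum, ← zero_add (Finset.sum _ _),
    algebraMap_eq]
  refine (isHomogeneous_C _ c).mul (IsHomogeneous.prod _ _ _ fun i _ => ?_)
  simpa [mul_comm] using (hf i).pow (d i)

theorem aeval_weightedHomogeneousComponent (hf : ∀ i, (f i).IsHomogeneous (w i))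
    (m : ℕ) (p : MvPolynomial σ R) :
    aeval f (weightedHomogeneousComponent w m p) = homogeneousComponent m (aeval f p) := by
  induction p using MvPolynomial.induction_on' with
  | monomial d c =>
    rw [weightedHomogeneousComponent_of_mem (isWeightedHomogeneous_monomial w d c rfl),
      homogeneousComponent_of_mem (isHomogeneous_aeval_monomial hf d c)]
    split_ifs <;> simp
  | add p q hp hq => simp only [map_add, hp, hq]

theorem isWeightedHomogeneous_of_isHomogeneous_aeval (hf : ∀ i, (f i).IsHomogeneous (w i))
    (hinj : Injective (aeval (R := R) f)) {p : MvPolynomial σ R} {n : ℕ}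
    (hp : (aeval f p).IsHomogeneous n) : p.IsWeightedHomogeneous w n := by
  classical
  intro d hd
  by_contra hne
  have hzero : weightedHomogeneousComponent w (Finsupp.weight w d) p = 0 := by
    apply hinj
    rw [aeval_weightedHomogeneousComponent hf, homogeneousComponent_of_mem hp, if_neg hne,
      map_zero]
  simpa [coeff_weightedHomogeneousComponent, hd] using congrArg (coeff d) hzero

end Substitution

theorem eq_of_forall_aeval_eq {σ R S : Type*} [CommRing R] [CommRing S] [IsDomain S]
    [Infinite S] [Algebra R S] (hRS : Injective (algebraMap R S)) {p q : MvPolynomial σ R}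
    (h : ∀ x : σ → S, aeval x p = aeval x q) : p = q :=
  map_injective _ hRS <| MvPolynomial.funext fun x => by simpa [eval_map, aeval_def] using h x

theorem isHomogeneous_psum (σ R : Type*) [CommSemiring R] [Fintype σ] (n : ℕ) :
    (psum σ R n).IsHomogeneous n :=
  IsHomogeneous.sum _ _ _ fun i _ => isHomogeneous_X_pow i n

theorem aeval_esymm_fin_injective (R : Type*) [CommRing R] (n : ℕ) :
    Injective (aeval (R := R) fun i : Fin n => esymm (Fin n) R (i + 1)) := by
  intro p q h
  apply esymmAlgHom_fin_injective R le_rfl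
  ext1
  simpa [esymmAlgHom_apply] using h

theorem aeval_psum_fin_two_injective (R : Type*) [CommRing R] [Invertible (2 : R)] :
    Injective (aeval (R := R) fun i : Fin 2 => psum (Fin 2) R (i + 1)) := by
  have hinv : LeftInverse (aeval (R := R) ![X 0, C ⅟2 * (X 0 ^ 2 - X 1)])
      (aeval (R := R) ![X 0, X 0 ^ 2 - 2 * X 1]) := by
    intro p
    rw [← AlgHom.comp_apply, comp_aeval]
    conv_rhs => rw [← aeval_X_left_apply p]
    congr 2
    ext i : 1
    fin_cases i
    · simp
    · have h2 : (2 : MvPolynomial (Fin 2) R) * C ⅟2 = 1 := by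
        rw [← map_ofNat C 2, ← C_mul, mul_invOf_self, C_1]
      simp only [Fin.isValue, Fin.mk_one, Matrix.cons_val_one, Matrix.cons_val_zero, map_sub,
        map_mul, map_pow, map_ofNat, aeval_X]
      linear_combination (X 1 - X 0 ^ 2) * h2
  -- `p₁ = e₁` and `p₂ = e₁² - 2 e₂`
  have hcomp : (aeval (R := R) fun i : Fin 2 => psum (Fin 2) R (i + 1)) =
      (aeval (R := R) fun i : Fin 2 => esymm (Fin 2) R (i + 1)).comp
        (aeval ![X 0, X 0 ^ 2 - 2 * X 1]) := by
    have he2 : esymm (Fin 2) R 2 = X 0 * X 1 := by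
      rw [esymm, show (Finset.univ : Finset (Fin 2)).powersetCard 2 = {Finset.univ} from rfl]
      simp [Fin.prod_univ_two]
    rw [comp_aeval]
    congr 1
    ext i : 1
    fin_cases i
    · simp [psum_one]
    · simp only [Fin.isValue, Fin.mk_one, Matrix.cons_val_one, Matrix.cons_val_zero, map_sub,
        map_mul, map_pow, map_ofNat, aeval_X]
      simp [psum, esymm_one, he2, Fin.sum_univ_two]
      ring
  rw [hcomp]
  exact (aeval_esymm_fin_injective R 2).comp hinv.injective

theorem aeval_aeval_psum_fin_two {R S : Type*} [CommSemiring R] [CommSemiring S] [Algebra R S]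
    (x : Fin 2 → S) (p : MvPolynomial (Fin 2) R) :
    aeval x (aeval (fun i : Fin 2 => psum (Fin 2) R (i + 1)) p) =
      aeval ![x 0 + x 1, x 0 ^ 2 + x 1 ^ 2] p := by
  rw [comp_aeval_apply]
  congr 2
  ext i
  fin_cases i <;> simp [psum, Fin.sum_univ_two]

theorem weight_fin_two (d : Fin 2 →₀ ℕ) :
    Finsupp.weight (fun i : Fin 2 => (i : ℕ) + 1) d = d 0 + 2 * d 1 := by
  simp [Finsupp.weight_apply, Finsupp.sum_fintype, Fin.sum_univ_two, mul_comm]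

theorem eval_zero_of_isWeightedHomogeneous_fin_two {R : Type*} [CommSemiring R]
    {p : MvPolynomial (Fin 2) R} {m : ℕ}
    (hp : p.IsWeightedHomogeneous (fun i : Fin 2 => (i : ℕ) + 1) (2 * m)) (y : R) :
    eval ![0, y] p = coeff (Finsupp.single 1 m) p * y ^ m := by
  rw [eval_eq', Finset.sum_eq_single (Finsupp.single 1 m)]
  · simp
  · intro d hd hne
    have hw := hp (mem_support_iff.mp hd)
    rw [weight_fin_two] at hw
    have h0 : d 0 ≠ 0 := fun h0 => hne <| by
      rw [Finsupp.eq_single_one_of_apply_zero_eq_zero h0]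
      congr
      omega
    simp [Fin.prod_univ_two, h0]
  · intro h
    simp [notMem_support_iff.mp h]

end MvPolynomial

theorem even_power_sum_polynomial_structure (k : ℕ) (P : MvPolynomial (Fin 2) ℚ)
    (hP : ∀ t s : ℝ,
      t ^ (2 * k + 2) + s ^ (2 * k + 2) =
        MvPolynomial.aeval ![t + s, t ^ 2 + s ^ 2] P) :
    (∀ d ∈ P.support, d 0 + 2 * d 1 = 2 * k + 2) ∧
    MvPolynomial.coeff (Finsupp.single 1 (k + 1)) P = (1 : ℚ) / 2 ^ k ∧
    (∀ d ∈ P.support, d ≠ Finsupp.single 1 (k + 1) →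
      k + 2 ≤ d 0 + d 1) := by
  have hpoly : aeval (fun i : Fin 2 => psum (Fin 2) ℚ (i + 1)) P = psum (Fin 2) ℚ (2 * k + 2) :=
    eq_of_forall_aeval_eq (algebraMap ℚ ℝ).injective fun x => by
      rw [aeval_aeval_psum_fin_two, ← hP]
      simp [psum, Fin.sum_univ_two]
  have hhom : P.IsWeightedHomogeneous (fun i : Fin 2 => (i : ℕ) + 1) (2 * (k + 1)) :=
    isWeightedHomogeneous_of_isHomogeneous_aeval (fun i => isHomogeneous_psum _ _ _)
      (aeval_psum_fin_two_injective ℚ) (hpoly ▸ isHomogeneous_psum _ _ _)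
  have hsupp : ∀ d ∈ P.support, d 0 + 2 * d 1 = 2 * k + 2 := fun d hd => by
    rw [← weight_fin_two, hhom (mem_support_iff.mp hd), mul_add_one]
  have hcoeff : coeff (Finsupp.single 1 (k + 1)) P * 2 ^ (k + 1) = 2 := by
    rw [← eval_zero_of_isWeightedHomogeneous_fin_two hhom]
    have heval := congrArg (aeval ![(1 : ℚ), -1]) hpoly
    rw [aeval_aeval_psum_fin_two] at heval
    have hneg : (-1 : ℚ) ^ (2 * k + 2) = 1 := Even.neg_one_pow ⟨k + 1, by ring⟩
    simpa [psum, Fin.sum_univ_two, hneg, one_add_one_eq_two] using heval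
  refine ⟨hsupp, ?_, fun d hd hne => ?_⟩
  · rw [eq_div_iff (by positivity)]
    linear_combination hcoeff / 2
  · have hw := hsupp d hd
    have h0 : d 0 ≠ 0 := fun h0 => hne <| by
      rw [Finsupp.eq_single_one_of_apply_zero_eq_zero h0]
      congr
      omega
    omega
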